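/- Let d > 0, let D be a standard normal random vector in R^k, and let ζ_{k,d} have the distribution of D conditioned on the event D^T D ≤ d (a spherically truncated standard normal). Then the covariance matrix of ζ_{k,d} equals r_{k,d} · I_k, where r_{k,d} = P(χ²_{k+2} ≤ d) / P(χ²_k ≤ d) and χ²_m denotes a chi-squared random variable with m degrees of freedom. -/

import Mathlib

open MeasureTheory ProbabilityTheory

/-- The standard Gaussian measure on `ℝ^k`. -/
noncomputable def stdGaussian (k : ℕ) : Measure (Fin k → ℝ) :=
  Measure.pi fun _ => gaussianReal 0 1

/-- The chi-squared distribution with `m` degrees of freedom, as the law of the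
squared norm of an `m`-dimensional standard Gaussian vector. -/
noncomputable def chiSq (m : ℕ) : Measure ℝ :=
  (stdGaussian m).map fun x => ∑ i, (x i) ^ 2

/-- `P(χ²_m ≤ d)` as a real number. -/
noncomputable def chiSqCDF (m : ℕ) (d : ℝ) : ℝ :=
  (chiSq m (Set.Iic d)).toReal

/-- The truncated Gaussian `ζ_{k,d}`: the law of a standard Gaussian vector `D` in `ℝ^k`
conditioned on the event `Dᵀ D ≤ d`. -/
noncomputable def truncGaussian (k : ℕ) (d : ℝ) : Measure (Fin k → ℝ) :=
  (stdGaussian k)[|{x | ∑ i, (x i) ^ 2 ≤ d}]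

namespace TruncProof

open Real Set
open scoped ENNReal NNReal

local notation "γ" => gaussianReal (0:ℝ) (1:NNReal)

lemma measurable_sumSq (m : ℕ) : Measurable fun x : Fin m → ℝ => ∑ i, x i ^ 2 :=
  Finset.measurable_sum _ fun i _ => (measurable_pi_apply i).pow_const 2

instance stdGaussian_prob (k : ℕ) : IsProbabilityMeasure (stdGaussian k) := by
  unfold _root_.stdGaussian; infer_instance

lemma measurableSet_A (m : ℕ) (c : ℝ) :
    MeasurableSet {x : Fin m → ℝ | ∑ i, x i ^ 2 ≤ c} :=
  measurableSet_le (measurable_sumSq m) measurable_const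

lemma chiSqCDF_eq (m : ℕ) (d : ℝ) :
    chiSqCDF m d = (stdGaussian m {x | ∑ i, x i ^ 2 ≤ d}).toReal := by
  rw [chiSqCDF, chiSq, Measure.map_apply (measurable_sumSq m) measurableSet_Iic]
  rfl

lemma integral_gaussianReal_eq (f : ℝ → ℝ) :
    ∫ x, f x ∂γ = ∫ x, gaussianPDFReal 0 1 x * f x := by
  rw [gaussianReal_of_var_ne_zero 0 one_ne_zero, gaussianPDF_def]
  have h : (fun x => ENNReal.ofReal (gaussianPDFReal 0 1 x))
      = fun x => ((gaussianPDFReal 0 1 x).toNNReal : ℝ≥0∞) := rfl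
  rw [h, integral_withDensity_eq_integral_smul (measurable_gaussianPDFReal 0 1).real_toNNReal]
  refine integral_congr_ae (Filter.Eventually.of_forall fun x => ?_)
  simp [NNReal.smul_def, Real.coe_toNNReal _ (gaussianPDFReal_nonneg 0 1 x)]

lemma gaussianPDFReal_std (x : ℝ) :
    gaussianPDFReal 0 1 x = (√(2*π))⁻¹ * rexp (-(x^2)/2) := by
  simp [gaussianPDFReal]

lemma integrable_of_bound {α : Type*} [MeasurableSpace α] (μ : Measure α) [IsFiniteMeasure μ]
    (f : α → ℝ) (hm : Measurable f) (C : ℝ) (h : ∀ x, |f x| ≤ C) : Integrable f μ :=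
  (integrable_const C).mono' hm.aestronglyMeasurable (Filter.Eventually.of_forall (by simpa using h))


lemma integral_peel {m : ℕ} (i : Fin (m+1)) (f : (Fin (m+1) → ℝ) → ℝ)
    (hf : Integrable f (stdGaussian (m+1))) :
    ∫ x, f x ∂(stdGaussian (m+1)) = ∫ u, ∫ y, f (i.insertNth u y) ∂(stdGaussian m) ∂γ := by
  have hmp : MeasurePreserving (MeasurableEquiv.piFinSuccAbove (fun _ : Fin (m+1) => ℝ) i)
      (stdGaussian (m+1)) (Measure.prod γ (stdGaussian m)) :=
    measurePreserving_piFinSuccAbove (fun _ : Fin (m+1) => γ) i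
  set e := MeasurableEquiv.piFinSuccAbove (fun _ : Fin (m+1) => ℝ) i with he
  have h1 : ∫ x, f x ∂(stdGaussian (m+1)) = ∫ p, f (e.symm p) ∂(Measure.prod γ (stdGaussian m)) :=
    ((hmp.symm e).integral_comp' f).symm
  have hf' : Integrable (fun p => f (e.symm p)) (Measure.prod γ (stdGaussian m)) :=
    ((hmp.symm e).integrable_comp_emb e.symm.measurableEmbedding).mpr hf
  rw [h1, integral_prod _ hf']
  refine integral_congr_ae (Filter.Eventually.of_forall fun u => ?_)
  refine integral_congr_ae (Filter.Eventually.of_forall fun y => ?_)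
  congr 1

lemma sum_insertNth_sq (m : ℕ) (i : Fin (m+1)) (u : ℝ) (y : Fin m → ℝ) :
    ∑ j, (i.insertNth u y j)^2 = u^2 + ∑ j, (y j)^2 := by
  rw [Fin.sum_univ_succAbove _ i]
  simp


lemma indicator_bound {α : Type*} (s : Set α) (f : α → ℝ) (C : ℝ) (hC : 0 ≤ C)
    (h : ∀ x ∈ s, |f x| ≤ C) (x : α) : |Set.indicator s f x| ≤ C := by
  by_cases hx : x ∈ s
  · rw [Set.indicator_of_mem hx]; exact h x hx
  · rw [Set.indicator_of_notMem hx]; simpa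

lemma chiSqCDF_succ (m : ℕ) (c : ℝ) :
    chiSqCDF (m+1) c = ∫ u, chiSqCDF m (c - u^2) ∂γ := by
  rw [chiSqCDF_eq, ← measureReal_def, ← integral_indicator_one (measurableSet_A (m+1) c)]
  rw [integral_peel 0 _ (integrable_of_bound _ _
      ((measurable_one.indicator (measurableSet_A (m+1) c))) 1
      (indicator_bound _ _ 1 one_pos.le (fun x _ => by simp)))]
  refine integral_congr_ae (Filter.Eventually.of_forall fun u => ?_)
  have : ∀ y : Fin m → ℝ,
      Set.indicator {x : Fin (m+1) → ℝ | ∑ i, x i ^ 2 ≤ c} (1 : (Fin (m+1) → ℝ) → ℝ) ((0 : Fin (m+1)).insertNth u y)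
      = Set.indicator {y : Fin m → ℝ | ∑ j, y j ^ 2 ≤ c - u^2} (1 : (Fin m → ℝ) → ℝ) y := by
    intro y
    have hmem : ((0 : Fin (m+1)).insertNth u y ∈ {x : Fin (m+1) → ℝ | ∑ i, x i ^ 2 ≤ c})
        ↔ (y ∈ {y : Fin m → ℝ | ∑ j, y j ^ 2 ≤ c - u^2}) := by
      simp only [Set.mem_setOf_eq, sum_insertNth_sq]
      constructor <;> intro h <;> linarith
    by_cases hy : y ∈ {y : Fin m → ℝ | ∑ j, y j ^ 2 ≤ c - u^2}
    · rw [Set.indicator_of_mem hy, Set.indicator_of_mem (hmem.mpr hy)]; rfl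
    · rw [Set.indicator_of_notMem hy, Set.indicator_of_notMem (fun h => hy (hmem.mp h))]
  dsimp only
  rw [integral_congr_ae (Filter.Eventually.of_forall this),
    integral_indicator_one (measurableSet_A m (c - u^2)), chiSqCDF_eq, measureReal_def]


noncomputable def Qfun (m : ℕ) (c : ℝ) : ℝ :=
  ∫ y, Set.indicator {y : Fin m → ℝ | ∑ j, y j ^ 2 ≤ c}
    (fun y => 1 - rexp ((∑ j, y j ^ 2 - c)/2)) y ∂(stdGaussian m)

lemma Q_val_bound (m : ℕ) (c : ℝ) (y : Fin m → ℝ)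
    (hy : y ∈ {y : Fin m → ℝ | ∑ j, y j ^ 2 ≤ c}) :
    |1 - rexp ((∑ j, y j ^ 2 - c)/2)| ≤ 1 := by
  have h1 : (∑ j, y j ^ 2 - c)/2 ≤ 0 := by
    have := hy; simp only [Set.mem_setOf_eq] at this; linarith
  have h2 : rexp ((∑ j, y j ^ 2 - c)/2) ≤ 1 := Real.exp_le_one_iff.mpr h1
  have h3 : 0 < rexp ((∑ j, y j ^ 2 - c)/2) := Real.exp_pos _
  rw [abs_le]; constructor <;> linarith

lemma measurable_Qval (m : ℕ) (c : ℝ) :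
    Measurable fun y : Fin m → ℝ => 1 - rexp ((∑ j, y j ^ 2 - c)/2) :=
  (measurable_const.sub ((((measurable_sumSq m).sub measurable_const).div_const 2).exp))

lemma Q_succ (m : ℕ) (c : ℝ) :
    Qfun (m+1) c = ∫ u, Qfun m (c - u^2) ∂γ := by
  rw [Qfun]
  rw [integral_peel 0 _ (integrable_of_bound _ _
      ((measurable_Qval (m+1) c).indicator (measurableSet_A (m+1) c)) 1
      (indicator_bound _ _ 1 one_pos.le (Q_val_bound (m+1) c)))]
  refine integral_congr_ae (Filter.Eventually.of_forall fun u => ?_)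
  have : ∀ y : Fin m → ℝ,
      Set.indicator {x : Fin (m+1) → ℝ | ∑ i, x i ^ 2 ≤ c}
        (fun x => 1 - rexp ((∑ j, x j ^ 2 - c)/2)) ((0 : Fin (m+1)).insertNth u y)
      = Set.indicator {y : Fin m → ℝ | ∑ j, y j ^ 2 ≤ c - u^2}
        (fun y => 1 - rexp ((∑ j, y j ^ 2 - (c - u^2))/2)) y := by
    intro y
    have hs : ∑ j, ((0 : Fin (m+1)).insertNth u y) j ^ 2 = u^2 + ∑ j, y j ^ 2 :=
      sum_insertNth_sq m 0 u y
    have hmem : ((0 : Fin (m+1)).insertNth u y ∈ {x : Fin (m+1) → ℝ | ∑ i, x i ^ 2 ≤ c})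
        ↔ (y ∈ {y : Fin m → ℝ | ∑ j, y j ^ 2 ≤ c - u^2}) := by
      simp only [Set.mem_setOf_eq, hs]
      constructor <;> intro h <;> linarith
    by_cases hy : y ∈ {y : Fin m → ℝ | ∑ j, y j ^ 2 ≤ c - u^2}
    · rw [Set.indicator_of_mem hy, Set.indicator_of_mem (hmem.mpr hy)]
      rw [hs]; ring_nf
    · rw [Set.indicator_of_notMem hy, Set.indicator_of_notMem (fun h => hy (hmem.mp h))]
  dsimp only
  rw [integral_congr_ae (Filter.Eventually.of_forall this)]
  rfl

lemma integral_stdGaussian_zero (g : (Fin 0 → ℝ) → ℝ) :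
    ∫ y, g y ∂(stdGaussian 0) = g default := by
  have h : g = fun _ => g default := funext fun y => congrArg g (Subsingleton.elim y default)
  rw [h, integral_const, measureReal_def, measure_univ]
  simp

lemma Qfun_zero (c : ℝ) : Qfun 0 c = if 0 ≤ c then 1 - rexp (-c/2) else 0 := by
  rw [Qfun, integral_stdGaussian_zero]
  by_cases hc : 0 ≤ c
  · rw [Set.indicator_of_mem (by simpa using hc), if_pos hc]
    simp [neg_div]
  · rw [Set.indicator_of_notMem (by simpa using hc), if_neg hc]

lemma chiSqCDF_of_neg (m : ℕ) (c : ℝ) (hc : c < 0) : chiSqCDF m c = 0 := by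
  rw [chiSqCDF_eq]
  have : {x : Fin m → ℝ | ∑ i, x i ^ 2 ≤ c} = ∅ := by
    ext x
    simp only [Set.mem_setOf_eq, Set.mem_empty_iff_false, iff_false, not_le]
    exact lt_of_lt_of_le hc (Finset.sum_nonneg fun i _ => sq_nonneg _)
  rw [this]
  simp


lemma measurableSet_sq_le (t : ℝ) : MeasurableSet {v : ℝ | v ^ 2 ≤ t} :=
  measurableSet_le (measurable_id'.pow_const 2) measurable_const

lemma chiSqCDF_one (t : ℝ) :
    chiSqCDF 1 t = (γ {v : ℝ | v ^ 2 ≤ t}).toReal := by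
  rw [chiSqCDF_eq]
  have hmp : MeasurePreserving (MeasurableEquiv.funUnique (Fin 1) ℝ)
      (Measure.pi fun _ : Fin 1 => γ) γ := measurePreserving_funUnique _ _
  have h1 : γ {v : ℝ | v ^ 2 ≤ t}
      = stdGaussian 1 ((MeasurableEquiv.funUnique (Fin 1) ℝ) ⁻¹' {v : ℝ | v ^ 2 ≤ t}) := by
    rw [← hmp.map_eq, Measure.map_apply (MeasurableEquiv.funUnique (Fin 1) ℝ).measurable
      (measurableSet_sq_le t)]
    rfl
  rw [h1]
  have h2 : (MeasurableEquiv.funUnique (Fin 1) ℝ) ⁻¹' {v : ℝ | v ^ 2 ≤ t}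
      = {x : Fin 1 → ℝ | ∑ i, x i ^ 2 ≤ t} := by
    ext x
    simp [MeasurableEquiv.funUnique, Fin.sum_univ_one]
  rw [h2]

lemma chiSqCDF_one' (t : ℝ) :
    chiSqCDF 1 t = ∫ v, Set.indicator {v : ℝ | v ^ 2 ≤ t} (1 : ℝ → ℝ) v ∂γ := by
  rw [chiSqCDF_one, integral_indicator_one (measurableSet_sq_le t), measureReal_def]

lemma sqrt_two_pi_sq : (√(2*π))⁻¹ * (√(2*π))⁻¹ = (2*π)⁻¹ := by
  rw [← mul_inv, Real.mul_self_sqrt (by positivity)]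

lemma hasDerivAt_negexp (r : ℝ) :
    HasDerivAt (fun r : ℝ => -rexp (-(r^2)/2)) (r * rexp (-(r^2)/2)) r := by
  have h1 : HasDerivAt (fun r : ℝ => -(r^2)/2) (-r) r := by
    have := ((hasDerivAt_pow 2 r).neg.div_const 2)
    refine this.congr_deriv ?_
    simp; ring
  have h2 := (h1.exp).neg
  refine h2.congr_deriv ?_
  ring

lemma chiSq2 (c : ℝ) (hc : 0 ≤ c) : chiSqCDF 2 c = 1 - rexp (-c/2) := by
  have hset : MeasurableSet {z : ℝ × ℝ | z.1^2 + z.2^2 ≤ c} :=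
    measurableSet_le ((measurable_fst.pow_const 2).add (measurable_snd.pow_const 2))
      measurable_const
  set g : ℝ × ℝ → ℝ := Set.indicator {z : ℝ × ℝ | z.1^2 + z.2^2 ≤ c}
      (fun z => gaussianPDFReal 0 1 z.1 * gaussianPDFReal 0 1 z.2) with hg
  have hg_int : Integrable g ((volume : Measure ℝ).prod (volume : Measure ℝ)) :=
    (Integrable.mul_prod (integrable_gaussianPDFReal 0 1) (integrable_gaussianPDFReal 0 1)).indicator hset
  -- Step A
  have stepA : chiSqCDF 2 c = ∫ z, g z ∂(volume : Measure (ℝ × ℝ)) := by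
    rw [show (2:ℕ) = 1 + 1 from rfl, chiSqCDF_succ, Measure.volume_eq_prod,
      integral_prod _ hg_int, integral_gaussianReal_eq]
    refine integral_congr_ae (Filter.Eventually.of_forall fun u => ?_)
    dsimp only
    rw [chiSqCDF_one', integral_gaussianReal_eq, ← integral_const_mul]
    refine integral_congr_ae (Filter.Eventually.of_forall fun v => ?_)
    dsimp only
    rw [hg]
    by_cases hv : u^2 + v^2 ≤ c
    · rw [Set.indicator_of_mem (show ((u,v) : ℝ × ℝ) ∈ {z : ℝ × ℝ | z.1^2 + z.2^2 ≤ c} from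
          by simp only [Set.mem_setOf_eq]; exact hv),
        Set.indicator_of_mem (show v ∈ {v : ℝ | v^2 ≤ c - u^2} from
          by simp only [Set.mem_setOf_eq]; linarith)]
      simp
    · rw [Set.indicator_of_notMem (show ((u,v) : ℝ × ℝ) ∉ {z : ℝ × ℝ | z.1^2 + z.2^2 ≤ c} from
          by simp only [Set.mem_setOf_eq]; exact hv),
        Set.indicator_of_notMem (show v ∉ {v : ℝ | v^2 ≤ c - u^2} from
          by simp only [Set.mem_setOf_eq]; intro h; apply hv; linarith)]
      simp
  -- Step B + C
  have stepC : ∀ p : ℝ × ℝ, p.1 • g (polarCoord.symm p)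
      = Set.indicator {p : ℝ × ℝ | p.1^2 ≤ c}
          (fun p => (2*π)⁻¹ * (p.1 * rexp (-(p.1^2)/2))) p := by
    intro p
    have hsymm : polarCoord.symm p = (p.1 * cos p.2, p.1 * sin p.2) := rfl
    have hsq : (p.1 * cos p.2)^2 + (p.1 * sin p.2)^2 = p.1^2 := by
      have := sin_sq_add_cos_sq p.2
      nlinarith [this]
    by_cases hp : p.1^2 ≤ c
    · rw [hsymm, hg, Set.indicator_of_mem (show ((p.1 * cos p.2, p.1 * sin p.2) : ℝ × ℝ) ∈
          {z : ℝ × ℝ | z.1^2 + z.2^2 ≤ c} by simp only [Set.mem_setOf_eq]; rw [hsq]; exact hp),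
        Set.indicator_of_mem (by simpa using hp)]
      simp only [gaussianPDFReal_std, smul_eq_mul]
      have he : rexp (-((p.1*cos p.2)^2)/2) * rexp (-((p.1*sin p.2)^2)/2)
          = rexp (-(p.1^2)/2) := by
        rw [← Real.exp_add]; congr 1; rw [← hsq]; ring
      calc p.1 * ((√(2*π))⁻¹ * rexp (-((p.1*cos p.2)^2)/2) *
            ((√(2*π))⁻¹ * rexp (-((p.1*sin p.2)^2)/2)))
          = p.1 * (((√(2*π))⁻¹ * (√(2*π))⁻¹) * (rexp (-((p.1*cos p.2)^2)/2) *
            rexp (-((p.1*sin p.2)^2)/2))) := by ring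
        _ = (2*π)⁻¹ * (p.1 * rexp (-(p.1^2)/2)) := by rw [sqrt_two_pi_sq, he]; ring
    · rw [hsymm, hg, Set.indicator_of_notMem (show ((p.1 * cos p.2, p.1 * sin p.2) : ℝ × ℝ) ∉
          {z : ℝ × ℝ | z.1^2 + z.2^2 ≤ c} by simp only [Set.mem_setOf_eq]; rw [hsq]; exact hp),
        Set.indicator_of_notMem (by simpa using hp)]
      simp
  -- target set computation
  have htarget : {p : ℝ × ℝ | p.1^2 ≤ c} ∩ polarCoord.target
      = Set.Ioc 0 (√c) ×ˢ Set.Ioo (-π) π := by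
    have : polarCoord.target = Set.Ioi (0:ℝ) ×ˢ Set.Ioo (-π) π := rfl
    rw [this]
    ext p
    simp only [Set.mem_inter_iff, Set.mem_setOf_eq, Set.mem_prod, Set.mem_Ioi, Set.mem_Ioo,
      Set.mem_Ioc]
    constructor
    · rintro ⟨h1, h2, h3⟩
      refine ⟨⟨h2, ?_⟩, h3⟩
      have := Real.sqrt_le_sqrt h1
      rwa [Real.sqrt_sq h2.le] at this
    · rintro ⟨⟨h1, h2⟩, h3⟩
      refine ⟨?_, h1, h3⟩
      calc p.1^2 ≤ (√c)^2 := by nlinarith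
        _ = c := Real.sq_sqrt hc
  -- main computation
  rw [stepA, ← integral_comp_polarCoord_symm g,
    setIntegral_congr_fun polarCoord.open_target.measurableSet
      (fun p _ => stepC p),
    setIntegral_indicator (measurableSet_le (measurable_fst.pow_const 2) measurable_const),
    Set.inter_comm, htarget]
  have hcont : Continuous fun p : ℝ × ℝ => (2*π)⁻¹ * (p.1 * rexp (-(p.1^2)/2)) := by
    fun_prop
  have hInt : IntegrableOn (fun p : ℝ × ℝ => (2*π)⁻¹ * (p.1 * rexp (-(p.1^2)/2)))
      ((Set.Ioc 0 (√c)) ×ˢ (Set.Ioo (-π) π)) ((volume : Measure ℝ).prod volume) := by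
    rw [← Measure.volume_eq_prod]
    exact ((hcont.continuousOn).integrableOn_compact
      ((isCompact_Icc (a := (0:ℝ)) (b := √c)).prod (isCompact_Icc (a := -π) (b := π)))).mono_set
      (Set.prod_mono Set.Ioc_subset_Icc_self Set.Ioo_subset_Icc_self)
  rw [Measure.volume_eq_prod, setIntegral_prod _ hInt]
  have hIoo : ((volume : Measure ℝ) (Set.Ioo (-π) π)).toReal = 2*π := by
    rw [Real.volume_Ioo, ENNReal.toReal_ofReal (by linarith [Real.pi_pos] : (0:ℝ) ≤ π - -π)]; ring
  have hinner : ∀ r : ℝ, (∫ _θ in Set.Ioo (-π) π, (2*π)⁻¹ * (r * rexp (-(r^2)/2)))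
      = r * rexp (-(r^2)/2) := by
    intro r
    rw [setIntegral_const, measureReal_def, hIoo, smul_eq_mul, ← mul_assoc,
      mul_inv_cancel₀ (by positivity), one_mul]
  rw [setIntegral_congr_fun measurableSet_Ioc (fun r _ => hinner r),
    ← intervalIntegral.integral_of_le (Real.sqrt_nonneg c),
    intervalIntegral.integral_eq_sub_of_hasDerivAt (fun x _ => hasDerivAt_negexp x)
      ((continuous_id.mul (by fun_prop : Continuous fun r : ℝ => rexp (-(r^2)/2))).intervalIntegrable 0 (√c)),
    Real.sq_sqrt hc]
  norm_num
  ring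


lemma Q_eq (m : ℕ) : ∀ c : ℝ, chiSqCDF (m+2) c = Qfun m c := by
  induction m with
  | zero =>
    intro c
    by_cases hc : 0 ≤ c
    · rw [chiSq2 c hc, Qfun_zero, if_pos hc]
    · rw [Qfun_zero, if_neg hc, chiSqCDF_of_neg _ _ (lt_of_not_ge hc)]
  | succ m ih =>
    intro c
    rw [show m+1+2 = (m+2)+1 from rfl, chiSqCDF_succ, Q_succ]
    exact integral_congr_ae (Filter.Eventually.of_forall fun u => ih _)

lemma hasDerivAt_negsq (t : ℝ) : HasDerivAt (fun r : ℝ => -(r^2)/2) (-t) t := by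
  have := ((hasDerivAt_pow 2 t).neg.div_const 2)
  refine this.congr_deriv ?_
  simp; ring

lemma continuous_pdf : Continuous (gaussianPDFReal 0 1) := by
  rw [gaussianPDFReal_def]; fun_prop

lemma one_dim (c : ℝ) :
    ∫ t, Set.indicator {t : ℝ | t^2 ≤ c} (fun t => t^2) t ∂γ
    = ∫ t, Set.indicator {t : ℝ | t^2 ≤ c} (fun t => 1 - rexp ((t^2 - c)/2)) t ∂γ := by
  by_cases hc : 0 ≤ c
  swap
  · have hempty : {t : ℝ | t^2 ≤ c} = ∅ := by
      ext t
      simp only [Set.mem_setOf_eq, Set.mem_empty_iff_false, iff_false, not_le]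
      nlinarith [sq_nonneg t]
    simp [hempty]
  have hIcc : {t : ℝ | t^2 ≤ c} = Set.Icc (-√c) (√c) := by
    ext t
    simp only [Set.mem_setOf_eq, Set.mem_Icc]
    constructor
    · intro h
      have h2 : |t| ≤ √c := by
        rw [← Real.sqrt_sq_eq_abs]; exact Real.sqrt_le_sqrt h
      exact abs_le.mp h2
    · rintro ⟨h1, h2⟩
      nlinarith [Real.sq_sqrt hc]
  have hpull : ∀ (f : ℝ → ℝ),
      (fun t => gaussianPDFReal 0 1 t * Set.indicator {t : ℝ | t^2 ≤ c} f t)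
      = Set.indicator {t : ℝ | t^2 ≤ c} (fun t => gaussianPDFReal 0 1 t * f t) := by
    intro f
    funext t
    by_cases h : t ∈ {t : ℝ | t^2 ≤ c}
    · rw [Set.indicator_of_mem h, Set.indicator_of_mem h]
    · rw [Set.indicator_of_notMem h, Set.indicator_of_notMem h, mul_zero]
  rw [integral_gaussianReal_eq, integral_gaussianReal_eq, hpull, hpull,
    integral_indicator (measurableSet_sq_le c), integral_indicator (measurableSet_sq_le c),
    hIcc, integral_Icc_eq_integral_Ioc, integral_Icc_eq_integral_Ioc,
    ← intervalIntegral.integral_of_le (by linarith [Real.sqrt_nonneg c] : -√c ≤ √c),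
    ← intervalIntegral.integral_of_le (by linarith [Real.sqrt_nonneg c] : -√c ≤ √c)]
  have e1 : ∀ t : ℝ, gaussianPDFReal 0 1 t * t^2
      = gaussianPDFReal 0 1 t - (√(2*π))⁻¹ * ((1-t^2) * rexp (-(t^2)/2)) := by
    intro t; rw [gaussianPDFReal_std]; ring
  have e2 : ∀ t : ℝ, gaussianPDFReal 0 1 t * (1 - rexp ((t^2-c)/2))
      = gaussianPDFReal 0 1 t - (√(2*π))⁻¹ * rexp (-c/2) := by
    intro t
    have he : rexp (-(t^2)/2) * rexp ((t^2-c)/2) = rexp (-c/2) := by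
      rw [← Real.exp_add]; congr 1; ring
    calc gaussianPDFReal 0 1 t * (1 - rexp ((t^2-c)/2))
        = gaussianPDFReal 0 1 t - (√(2*π))⁻¹ * (rexp (-(t^2)/2) * rexp ((t^2-c)/2)) := by
          rw [gaussianPDFReal_std]; ring
      _ = gaussianPDFReal 0 1 t - (√(2*π))⁻¹ * rexp (-c/2) := by rw [he]
  rw [intervalIntegral.integral_congr (g := fun t => gaussianPDFReal 0 1 t
      - (√(2*π))⁻¹ * ((1-t^2) * rexp (-(t^2)/2))) (fun t _ => e1 t),
    intervalIntegral.integral_congr (g := fun t => gaussianPDFReal 0 1 t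
      - (√(2*π))⁻¹ * rexp (-c/2)) (fun t _ => e2 t)]
  have hint1 : IntervalIntegrable (gaussianPDFReal 0 1) volume (-√c) (√c) :=
    continuous_pdf.intervalIntegrable _ _
  have hint2 : IntervalIntegrable (fun t : ℝ => (√(2*π))⁻¹ * ((1-t^2) * rexp (-(t^2)/2)))
      volume (-√c) (√c) := (by fun_prop : Continuous fun t : ℝ =>
      (√(2*π))⁻¹ * ((1-t^2) * rexp (-(t^2)/2))).intervalIntegrable _ _
  have hint3 : IntervalIntegrable (fun _ : ℝ => (√(2*π))⁻¹ * rexp (-c/2))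
      volume (-√c) (√c) := intervalIntegrable_const
  rw [intervalIntegral.integral_sub hint1 hint2, intervalIntegral.integral_sub hint1 hint3]
  congr 1
  have hF : ∀ t : ℝ, HasDerivAt (fun t : ℝ => (√(2*π))⁻¹ * (t * rexp (-(t^2)/2)))
      ((√(2*π))⁻¹ * ((1 - t^2) * rexp (-(t^2)/2))) t := by
    intro t
    have h2 : HasDerivAt (fun r : ℝ => r * rexp (-(r^2)/2))
        (1 * rexp (-(t^2)/2) + t * (rexp (-(t^2)/2) * -t)) t :=
      (hasDerivAt_id t).mul ((hasDerivAt_negsq t).exp)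
    have h3 := h2.const_mul ((√(2*π))⁻¹)
    refine h3.congr_deriv ?_
    ring
  rw [intervalIntegral.integral_eq_sub_of_hasDerivAt (fun t _ => hF t) hint2,
    intervalIntegral.integral_const]
  rw [Real.sq_sqrt hc, neg_sq, Real.sq_sqrt hc, smul_eq_mul]
  ring


lemma diag (m : ℕ) (i : Fin (m+1)) (d : ℝ) :
    ∫ x, Set.indicator {x : Fin (m+1) → ℝ | ∑ j, x j ^ 2 ≤ d} (fun x => x i ^ 2) x
      ∂(stdGaussian (m+1)) = chiSqCDF (m+1+2) d := by
  have hSmeas : MeasurableSet {q : ℝ × (Fin m → ℝ) | q.1^2 + ∑ j, q.2 j ^ 2 ≤ d} :=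
    measurableSet_le ((measurable_fst.pow_const 2).add
      ((measurable_sumSq m).comp measurable_snd)) measurable_const
  have hsum_le : ∀ (q : ℝ × (Fin m → ℝ)), q ∈ {q : ℝ × (Fin m → ℝ) | q.1^2 + ∑ j, q.2 j ^ 2 ≤ d}
      → q.1^2 ≤ d := by
    intro q hq
    simp only [Set.mem_setOf_eq] at hq
    have : (0:ℝ) ≤ ∑ j, q.2 j ^ 2 := Finset.sum_nonneg fun j _ => sq_nonneg _
    linarith
  have htrans1 : ∀ (u : ℝ) (y : Fin m → ℝ),
      Set.indicator {x : Fin (m+1) → ℝ | ∑ j, x j ^ 2 ≤ d} (fun x => x i ^ 2) (i.insertNth u y)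
      = Set.indicator {q : ℝ × (Fin m → ℝ) | q.1^2 + ∑ j, q.2 j ^ 2 ≤ d}
          (fun q => q.1^2) (u, y) := by
    intro u y
    have hmem : (i.insertNth u y ∈ {x : Fin (m+1) → ℝ | ∑ j, x j ^ 2 ≤ d})
        ↔ ((u, y) ∈ {q : ℝ × (Fin m → ℝ) | q.1^2 + ∑ j, q.2 j ^ 2 ≤ d}) := by
      simp only [Set.mem_setOf_eq, sum_insertNth_sq]
    by_cases h : (u, y) ∈ {q : ℝ × (Fin m → ℝ) | q.1^2 + ∑ j, q.2 j ^ 2 ≤ d}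
    · rw [Set.indicator_of_mem h, Set.indicator_of_mem (hmem.mpr h), Fin.insertNth_apply_same]
    · rw [Set.indicator_of_notMem h, Set.indicator_of_notMem (fun hh => h (hmem.mp hh))]
  have htrans2 : ∀ (u : ℝ) (y : Fin m → ℝ),
      Set.indicator {x : Fin (m+1) → ℝ | ∑ j, x j ^ 2 ≤ d}
        (fun x => 1 - rexp ((∑ j, x j ^ 2 - d)/2)) (i.insertNth u y)
      = Set.indicator {q : ℝ × (Fin m → ℝ) | q.1^2 + ∑ j, q.2 j ^ 2 ≤ d}
          (fun q => 1 - rexp ((q.1^2 + ∑ j, q.2 j ^ 2 - d)/2)) (u, y) := by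
    intro u y
    have hmem : (i.insertNth u y ∈ {x : Fin (m+1) → ℝ | ∑ j, x j ^ 2 ≤ d})
        ↔ ((u, y) ∈ {q : ℝ × (Fin m → ℝ) | q.1^2 + ∑ j, q.2 j ^ 2 ≤ d}) := by
      simp only [Set.mem_setOf_eq, sum_insertNth_sq]
    by_cases h : (u, y) ∈ {q : ℝ × (Fin m → ℝ) | q.1^2 + ∑ j, q.2 j ^ 2 ≤ d}
    · rw [Set.indicator_of_mem h, Set.indicator_of_mem (hmem.mpr h), sum_insertNth_sq]
    · rw [Set.indicator_of_notMem h, Set.indicator_of_notMem (fun hh => h (hmem.mp hh))]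
  have htrans3 : ∀ (y : Fin m → ℝ) (u : ℝ),
      Set.indicator {q : ℝ × (Fin m → ℝ) | q.1^2 + ∑ j, q.2 j ^ 2 ≤ d} (fun q => q.1^2) (u, y)
      = Set.indicator {t : ℝ | t^2 ≤ d - ∑ j, y j ^ 2} (fun t => t^2) u := by
    intro y u
    have hmem : ((u, y) ∈ {q : ℝ × (Fin m → ℝ) | q.1^2 + ∑ j, q.2 j ^ 2 ≤ d})
        ↔ (u ∈ {t : ℝ | t^2 ≤ d - ∑ j, y j ^ 2}) := by
      simp only [Set.mem_setOf_eq]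
      constructor <;> intro h <;> linarith
    by_cases h : u ∈ {t : ℝ | t^2 ≤ d - ∑ j, y j ^ 2}
    · rw [Set.indicator_of_mem h, Set.indicator_of_mem (hmem.mpr h)]
    · rw [Set.indicator_of_notMem h, Set.indicator_of_notMem (fun hh => h (hmem.mp hh))]
  have htrans4 : ∀ (y : Fin m → ℝ) (u : ℝ),
      Set.indicator {q : ℝ × (Fin m → ℝ) | q.1^2 + ∑ j, q.2 j ^ 2 ≤ d}
        (fun q => 1 - rexp ((q.1^2 + ∑ j, q.2 j ^ 2 - d)/2)) (u, y)
      = Set.indicator {t : ℝ | t^2 ≤ d - ∑ j, y j ^ 2}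
          (fun t => 1 - rexp ((t^2 - (d - ∑ j, y j ^ 2))/2)) u := by
    intro y u
    have hmem : ((u, y) ∈ {q : ℝ × (Fin m → ℝ) | q.1^2 + ∑ j, q.2 j ^ 2 ≤ d})
        ↔ (u ∈ {t : ℝ | t^2 ≤ d - ∑ j, y j ^ 2}) := by
      simp only [Set.mem_setOf_eq]
      constructor <;> intro h <;> linarith
    by_cases h : u ∈ {t : ℝ | t^2 ≤ d - ∑ j, y j ^ 2}
    · rw [Set.indicator_of_mem h, Set.indicator_of_mem (hmem.mpr h)]
      rw [show (u^2 + ∑ j, y j ^ 2 - d)/2 = (u^2 - (d - ∑ j, y j ^ 2))/2 from by ring]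
    · rw [Set.indicator_of_notMem h, Set.indicator_of_notMem (fun hh => h (hmem.mp hh))]
  have hfint : Integrable (Set.indicator {x : Fin (m+1) → ℝ | ∑ j, x j ^ 2 ≤ d}
      (fun x => x i ^ 2)) (stdGaussian (m+1)) := by
    refine integrable_of_bound _ _ (((measurable_pi_apply i).pow_const 2).indicator
      (measurableSet_A (m+1) d)) |d| (indicator_bound _ _ _ (abs_nonneg d) ?_)
    intro x hx
    simp only [Set.mem_setOf_eq] at hx
    have h1 : x i ^ 2 ≤ ∑ j, x j ^ 2 :=
      Finset.single_le_sum (fun j _ => sq_nonneg (x j)) (Finset.mem_univ i)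
    rw [abs_of_nonneg (sq_nonneg _)]
    exact le_trans (le_trans h1 hx) (le_abs_self d)
  have hgint : Integrable (Set.indicator {x : Fin (m+1) → ℝ | ∑ j, x j ^ 2 ≤ d}
      (fun x => 1 - rexp ((∑ j, x j ^ 2 - d)/2))) (stdGaussian (m+1)) := by
    refine integrable_of_bound _ _ ((measurable_Qval (m+1) d).indicator
      (measurableSet_A (m+1) d)) 1 (indicator_bound _ _ _ one_pos.le (Q_val_bound (m+1) d))
  have hbF : Integrable (Function.uncurry fun (u : ℝ) (y : Fin m → ℝ) =>
      Set.indicator {q : ℝ × (Fin m → ℝ) | q.1^2 + ∑ j, q.2 j ^ 2 ≤ d}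
        (fun q => q.1^2) (u, y)) (Measure.prod γ (stdGaussian m)) := by
    refine integrable_of_bound _ _ ((measurable_fst.pow_const 2).indicator hSmeas) |d|
      (indicator_bound _ _ _ (abs_nonneg d) ?_)
    intro q hq
    rw [abs_of_nonneg (sq_nonneg _)]
    exact le_trans (hsum_le q hq) (le_abs_self d)
  have hbG : Integrable (Function.uncurry fun (u : ℝ) (y : Fin m → ℝ) =>
      Set.indicator {q : ℝ × (Fin m → ℝ) | q.1^2 + ∑ j, q.2 j ^ 2 ≤ d}
        (fun q => 1 - rexp ((q.1^2 + ∑ j, q.2 j ^ 2 - d)/2)) (u, y))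
      (Measure.prod γ (stdGaussian m)) := by
    refine integrable_of_bound _ _ ((measurable_const.sub ((((measurable_fst.pow_const 2).add
      ((measurable_sumSq m).comp measurable_snd)).sub measurable_const).div_const 2).exp).indicator
      hSmeas) 1 (indicator_bound _ _ _ one_pos.le ?_)
    intro q hq
    simp only [Set.mem_setOf_eq] at hq
    have h1 : (q.1^2 + ∑ j, q.2 j ^ 2 - d)/2 ≤ 0 := by linarith
    have h2 := Real.exp_le_one_iff.mpr h1
    have h3 := Real.exp_pos ((q.1^2 + ∑ j, q.2 j ^ 2 - d)/2)
    rw [abs_le]; constructor <;> linarith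
  calc ∫ x, Set.indicator {x : Fin (m+1) → ℝ | ∑ j, x j ^ 2 ≤ d} (fun x => x i ^ 2) x
        ∂(stdGaussian (m+1))
      = ∫ u, ∫ y, Set.indicator {x : Fin (m+1) → ℝ | ∑ j, x j ^ 2 ≤ d} (fun x => x i ^ 2)
          (i.insertNth u y) ∂(stdGaussian m) ∂γ := integral_peel i _ hfint
    _ = ∫ u, ∫ y, Set.indicator {q : ℝ × (Fin m → ℝ) | q.1^2 + ∑ j, q.2 j ^ 2 ≤ d}
          (fun q => q.1^2) (u, y) ∂(stdGaussian m) ∂γ := by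
        refine integral_congr_ae (Filter.Eventually.of_forall fun u => ?_)
        exact integral_congr_ae (Filter.Eventually.of_forall fun y => htrans1 u y)
    _ = ∫ y, ∫ u, Set.indicator {q : ℝ × (Fin m → ℝ) | q.1^2 + ∑ j, q.2 j ^ 2 ≤ d}
          (fun q => q.1^2) (u, y) ∂γ ∂(stdGaussian m) := integral_integral_swap hbF
    _ = ∫ y, ∫ u, Set.indicator {q : ℝ × (Fin m → ℝ) | q.1^2 + ∑ j, q.2 j ^ 2 ≤ d}
          (fun q => 1 - rexp ((q.1^2 + ∑ j, q.2 j ^ 2 - d)/2)) (u, y) ∂γ ∂(stdGaussian m) := by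
        refine integral_congr_ae (Filter.Eventually.of_forall fun y => ?_)
        dsimp only
        rw [integral_congr_ae (Filter.Eventually.of_forall (htrans3 y)),
          one_dim (d - ∑ j, y j ^ 2),
          ← integral_congr_ae (Filter.Eventually.of_forall (htrans4 y))]
    _ = ∫ u, ∫ y, Set.indicator {q : ℝ × (Fin m → ℝ) | q.1^2 + ∑ j, q.2 j ^ 2 ≤ d}
          (fun q => 1 - rexp ((q.1^2 + ∑ j, q.2 j ^ 2 - d)/2)) (u, y)
          ∂(stdGaussian m) ∂γ := (integral_integral_swap hbG).symm
    _ = ∫ u, ∫ y, Set.indicator {x : Fin (m+1) → ℝ | ∑ j, x j ^ 2 ≤ d}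
          (fun x => 1 - rexp ((∑ j, x j ^ 2 - d)/2)) (i.insertNth u y)
          ∂(stdGaussian m) ∂γ := by
        refine integral_congr_ae (Filter.Eventually.of_forall fun u => ?_)
        exact integral_congr_ae (Filter.Eventually.of_forall fun y => (htrans2 u y).symm)
    _ = ∫ x, Set.indicator {x : Fin (m+1) → ℝ | ∑ j, x j ^ 2 ≤ d}
          (fun x => 1 - rexp ((∑ j, x j ^ 2 - d)/2)) x ∂(stdGaussian (m+1)) :=
        (integral_peel i _ hgint).symm
    _ = Qfun (m+1) d := rfl
    _ = chiSqCDF (m+1+2) d := (Q_eq (m+1) d).symm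


lemma offdiag (k : ℕ) (i j : Fin k) (hij : i ≠ j) (d : ℝ) :
    ∫ x in {x : Fin k → ℝ | ∑ l, x l ^ 2 ≤ d}, (x i * x j) ∂(stdGaussian k) = 0 := by
  classical
  set φ : (Fin k → ℝ) → (Fin k → ℝ) := fun x l => if l = i then -(x l) else x l with hφ
  have hφφ : ∀ x, φ (φ x) = x := by
    intro x; funext l; by_cases h : l = i <;> simp [φ, h]
  have hφmeas : Measurable φ := by
    refine measurable_pi_iff.mpr fun l => ?_
    by_cases h : l = i
    · simp only [φ, h, if_true]
      exact (measurable_pi_apply i).neg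
    · simp only [φ, h, if_false]
      exact measurable_pi_apply l
  have hneg : MeasurePreserving (fun x : ℝ => -x) γ γ := by
    refine ⟨measurable_neg, ?_⟩
    have h1 : (fun x : ℝ => -x) = (fun x : ℝ => (-1 : ℝ) * x) :=
      funext fun x => (neg_one_mul x).symm
    rw [h1, gaussianReal_map_const_mul]
    norm_num
  have hcomp : ∀ l : Fin k, MeasurePreserving (fun t : ℝ => if l = i then -t else t) γ γ := by
    intro l
    by_cases h : l = i
    · simpa only [h, if_true] using hneg
    · simp only [h, if_false]; exact MeasurePreserving.id γ
  have hmp : MeasurePreserving φ (stdGaussian k) (stdGaussian k) :=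
    measurePreserving_pi (fun _ : Fin k => γ) (fun _ => γ) hcomp
  have hpre : φ ⁻¹' {x : Fin k → ℝ | ∑ l, x l ^ 2 ≤ d} = {x : Fin k → ℝ | ∑ l, x l ^ 2 ≤ d} := by
    ext x
    simp only [Set.mem_preimage, Set.mem_setOf_eq, φ]
    have h2 : ∀ l : Fin k, (if l = i then -(x l) else x l)^2 = x l ^ 2 := fun l => by
      by_cases h : l = i <;> simp [h]
    rw [Finset.sum_congr rfl fun l _ => h2 l]
  have hres : MeasurePreserving φ ((stdGaussian k).restrict {x : Fin k → ℝ | ∑ l, x l ^ 2 ≤ d})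
      ((stdGaussian k).restrict {x : Fin k → ℝ | ∑ l, x l ^ 2 ≤ d}) := by
    have := hmp.restrict_preimage (measurableSet_A k d)
    rwa [hpre] at this
  let e : (Fin k → ℝ) ≃ᵐ (Fin k → ℝ) := ⟨⟨φ, φ, hφφ, hφφ⟩, hφmeas, hφmeas⟩
  have hkey := MeasurePreserving.integral_comp' (f := e) hres (fun x => x i * x j)
  have heval : ∀ x : Fin k → ℝ, (e x) i * (e x) j = -(x i * x j) := by
    intro x
    have h1 : (e x) i = -(x i) := by
      show (if i = i then -(x i) else x i) = -(x i)
      rw [if_pos rfl]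
    have h2 : (e x) j = x j := by
      show (if j = i then -(x j) else x j) = x j
      rw [if_neg (fun h => hij h.symm)]
    rw [h1, h2]; ring
  rw [integral_congr_ae (Filter.Eventually.of_forall heval), integral_neg] at hkey
  linarith
end TruncProof

open TruncProof

/-- the covariance matrix of the spherically truncated standard normal
`ζ_{k,d}` equals `r_{k,d} · I_k` with `r_{k,d} = P(χ²_{k+2} ≤ d) / P(χ²_k ≤ d)`. -/
theorem covariance_truncGaussian (k : ℕ) (d : ℝ) (hd : 0 < d) (i j : Fin k) :
    ∫ x, x i * x j ∂(truncGaussian k d) =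
      (chiSqCDF (k + 2) d / chiSqCDF k d) • (1 : Matrix (Fin k) (Fin k) ℝ) i j := by
  rw [truncGaussian, ProbabilityTheory.cond, integral_smul_measure]
  by_cases hij : i = j
  · subst hij
    have hk : 0 < k := i.pos
    obtain ⟨m, rfl⟩ : ∃ m, k = m + 1 := ⟨k - 1, by omega⟩
    have h1 : ∫ x in {x : Fin (m+1) → ℝ | ∑ l, x l ^ 2 ≤ d}, (x i * x i) ∂(stdGaussian (m+1))
        = chiSqCDF (m+1+2) d := by
      rw [← integral_indicator (measurableSet_A (m+1) d), ← diag m i d]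
      refine integral_congr_ae (Filter.Eventually.of_forall fun x => ?_)
      by_cases h : x ∈ {x : Fin (m+1) → ℝ | ∑ l, x l ^ 2 ≤ d}
      · rw [Set.indicator_of_mem h, Set.indicator_of_mem h]; ring
      · rw [Set.indicator_of_notMem h, Set.indicator_of_notMem h]
    rw [h1, Matrix.one_apply_eq, ENNReal.toReal_inv, ← chiSqCDF_eq, smul_eq_mul, smul_eq_mul,
      mul_one, div_eq_mul_inv, mul_comm]
  · rw [offdiag k i j hij d, smul_zero, Matrix.one_apply_ne hij, smul_zero]
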